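/- Let z ∈ ℂⁿ with unit-modulus entries, C = zz* + σW with W Hermitian, and x ∈ ℂⁿ with unit-modulus entries satisfying Cx = diag(μ)x where μₖ = |(Cx)ₖ|. Choose the global phase so z*x = |z*x|. If n - (3/2)d₂(z,x)² - σ‖Wx‖_∞ - σ‖W‖₂ > 0, then S := Re(ddiag(Cxx*)) - C is positive semidefinite of rank n - 1, and hence xx* is the unique SDP solution and x the unique (up to phase) maximizer of v*Cv over unit-modulus vectors v. -/

import Mathlib

noncomputable section

namespace PhaseSync

open Complex

variable {n : ℕ}

/-- Euclidean (ℓ²) norm on `Fin n → ℂ`. -/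
def l2norm (v : Fin n → ℂ) : ℝ :=
  Real.sqrt (∑ k, ‖v k‖ ^ 2)

/-- Entrywise sup (ℓ∞) norm on `Fin n → ℂ`. -/
def linfnorm (v : Fin n → ℂ) : ℝ :=
  ⨆ k, ‖v k‖

/-- Hermitian inner product `x*y = ∑ₖ conj(xₖ) yₖ`. -/
def herm (x y : Fin n → ℂ) : ℂ :=
  ∑ k, (starRingEnd ℂ) (x k) * y k

/-- Distance up to a global phase: `d₂(x,y) = inf_θ ‖x e^{iθ} - y‖₂`. -/
def d2 (x y : Fin n → ℂ) : ℝ :=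
  ⨅ θ : ℝ, l2norm (fun k => Complex.exp (θ * Complex.I) * x k - y k)

/-- Sup-norm distance up to a global phase. -/
def dinf (x y : Fin n → ℂ) : ℝ :=
  ⨅ θ : ℝ, linfnorm (fun k => Complex.exp (θ * Complex.I) * x k - y k)

/-- ℓ² operator (spectral) norm of a matrix. -/
def opNorm (A : Matrix (Fin n) (Fin n) ℂ) : ℝ :=
  ⨆ u : {u : Fin n → ℂ // l2norm u = 1}, l2norm (A.mulVec u)

/-- Entrywise projection to the unit circle (on nonzero entries). -/
def proj (v : Fin n → ℂ) : Fin n → ℂ :=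
  fun k => v k / (‖v k‖ : ℂ)

/-- The rank-one matrix `z z*`. -/
def outer (z : Fin n → ℂ) : Matrix (Fin n) (Fin n) ℂ :=
  Matrix.of fun i j => z i * (starRingEnd ℂ) (z j)

/-- The operator `ℒ v = (z*v/n) z + (σ/n) W v`. -/
def Lop (z : Fin n → ℂ) (σ : ℝ) (W : Matrix (Fin n) (Fin n) ℂ) (v : Fin n → ℂ) : Fin n → ℂ :=
  (herm z v / (n : ℂ)) • z + (σ / (n : ℝ)) • W.mulVec v

open scoped ComplexOrder

end PhaseSync

/-! The matrix `S = diag(|Cx|) - C` annihilates `x`, and on the orthogonal complement of `x` its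
quadratic form is at least the gap of the hypothesis times `‖u‖²`: the diagonal contributes at least
`|z*x| - σ‖Wx‖∞`, the rank-one part `zz*` costs `|z*u|² ≤ d₂(z,x)²‖u‖²` and the noise costs
`σ‖W‖₂`; since `|z*x| = n - d₂(z,x)²/2`, this is exactly `n - (3/2)d₂² - σ‖Wx‖∞ - σ‖W‖₂`. Hence `S`
is positive semidefinite with kernel spanned by `x`. Writing `C = diag(μ) - S`, every feasible `Y`
of the SDP has `tr(CY) = ∑ μ - tr(SY) ≤ ∑ μ = tr(Cxx*)`, with equality only if `SY = 0`, which
forces every column of `Y` onto the line of `x` and then `Y = xx*`. Taking `Y = vv*` gives the claim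
about unit-modulus vectors. -/

lemma RCLike.mul_star_eq_one_of_norm_eq_one {𝕜 : Type*} [RCLike 𝕜] {a : 𝕜} (h : ‖a‖ = 1) :
    a * star a = 1 := by
  rw [← starRingEnd_apply, RCLike.mul_conj, h, RCLike.ofReal_one, one_pow]

open ComplexConjugate in
lemma Complex.exp_arg_mul_I_mul_conj (h : ℂ) : exp (arg h * I) * conj h = ‖h‖ := by
  set e := exp (arg h * I)
  have hh : (‖h‖ : ℂ) * e = h := norm_mul_exp_arg_mul_I h
  calc e * conj h = e * conj (‖h‖ * e) := by rw [hh]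
    _ = ‖h‖ * (e * star e) := by rw [map_mul, conj_ofReal, starRingEnd_apply]; ring
    _ = ‖h‖ := by rw [RCLike.mul_star_eq_one_of_norm_eq_one (norm_exp_ofReal_mul_I _), mul_one]

namespace Matrix

open scoped ComplexOrder MatrixOrder

variable {ι 𝕜 : Type*} [Fintype ι] [RCLike 𝕜]

section OrthogonalComplement

variable {S : Matrix ι ι 𝕜} {x : ι → 𝕜}

lemma star_dotProduct_sub_proj_eq_zero (x v : ι → 𝕜) :
    star x ⬝ᵥ (v - ((star x ⬝ᵥ v) / (star x ⬝ᵥ x)) • x) = 0 := by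
  rcases eq_or_ne x 0 with rfl | hx
  · simp
  rw [dotProduct_sub, dotProduct_smul, smul_eq_mul,
    div_mul_cancel₀ _ (dotProduct_star_self_eq_zero.not.mpr hx), sub_self]

lemma IsHermitian.star_add_smul_dotProduct_mulVec (hS : S.IsHermitian) (hSx : S *ᵥ x = 0)
    (u : ι → 𝕜) (c : 𝕜) :
    star (u + c • x) ⬝ᵥ S *ᵥ (u + c • x) = star u ⬝ᵥ S *ᵥ u := by
  have hxS : star x ⬝ᵥ S *ᵥ u = 0 := by
    rw [dotProduct_mulVec, ← hS.eq, ← star_mulVec, hSx, star_zero, zero_dotProduct]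
  simp [mulVec_add, mulVec_smul, hSx, add_dotProduct, hxS]

lemma IsHermitian.posSemidef_of_nonneg_on_orthogonal (hS : S.IsHermitian) (hSx : S *ᵥ x = 0)
    (hpos : ∀ u, star x ⬝ᵥ u = 0 → 0 ≤ RCLike.re (star u ⬝ᵥ S *ᵥ u)) : S.PosSemidef := by
  refine .of_dotProduct_mulVec_nonneg hS fun v => ?_
  set c := (star x ⬝ᵥ v) / (star x ⬝ᵥ x)
  have hv : v = (v - c • x) + c • x := (sub_add_cancel v _).symm
  rw [hv, hS.star_add_smul_dotProduct_mulVec hSx, RCLike.nonneg_iff]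
  exact ⟨hpos _ (star_dotProduct_sub_proj_eq_zero x v), hS.im_star_dotProduct_mulVec_self _⟩

lemma ker_mulVecLin_eq_span_of_pos_on_orthogonal (hSx : S *ᵥ x = 0)
    (hpos : ∀ u, star x ⬝ᵥ u = 0 → u ≠ 0 → 0 < RCLike.re (star u ⬝ᵥ S *ᵥ u)) :
    LinearMap.ker S.mulVecLin = 𝕜 ∙ x := by
  refine le_antisymm (fun v hv => ?_) ?_
  · set c := (star x ⬝ᵥ v) / (star x ⬝ᵥ x)
    have hSv : S *ᵥ v = 0 := hv
    suffices v - c • x = 0 from Submodule.mem_span_singleton.mpr ⟨c, (sub_eq_zero.mp this).symm⟩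
    by_contra hu
    have := hpos _ (star_dotProduct_sub_proj_eq_zero x v) hu
    simp [mulVec_sub, mulVec_smul, hSv, hSx] at this
  · rw [Submodule.span_singleton_le_iff_mem]
    exact hSx

end OrthogonalComplement

lemma rank_eq_card_sub_one_of_ker_eq_span {K : Type*} [Field K] {S : Matrix ι ι K} {x : ι → K}
    (hx : x ≠ 0) (hker : LinearMap.ker S.mulVecLin = K ∙ x) :
    S.rank = Fintype.card ι - 1 := by
  have h := LinearMap.finrank_range_add_finrank_ker S.mulVecLin
  rw [hker, finrank_span_singleton hx, Module.finrank_fintype_fun_eq_card] at h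
  exact Nat.eq_sub_of_add_eq h

lemma PosSemidef.trace_mul_nonneg {S Y : Matrix ι ι 𝕜} (hS : S.PosSemidef) (hY : Y.PosSemidef) :
    0 ≤ (S * Y).trace := by
  classical
  obtain ⟨B, rfl⟩ := CStarAlgebra.nonneg_iff_eq_star_mul_self.mp hY.nonneg
  rw [star_eq_conjTranspose, ← mul_assoc, trace_mul_cycle]
  exact (hS.mul_mul_conjTranspose_same B).trace_nonneg

lemma PosSemidef.mul_eq_zero_of_trace_mul_eq_zero {S Y : Matrix ι ι 𝕜} (hS : S.PosSemidef)
    (hY : Y.PosSemidef) (h : (S * Y).trace = 0) : S * Y = 0 := by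
  classical
  obtain ⟨R, rfl⟩ := CStarAlgebra.nonneg_iff_eq_star_mul_self.mp hS.nonneg
  obtain ⟨B, rfl⟩ := CStarAlgebra.nonneg_iff_eq_star_mul_self.mp hY.nonneg
  simp only [star_eq_conjTranspose] at h ⊢
  have hRB : R * Bᴴ = 0 := by
    rw [← trace_mul_conjTranspose_self_eq_zero_iff, ← h, conjTranspose_mul,
      conjTranspose_conjTranspose, ← mul_assoc, trace_mul_comm]
    simp only [mul_assoc]
  rw [mul_assoc, ← mul_assoc R, hRB, zero_mul, mul_zero]

lemma eq_vecMulVec_of_mul_eq_zero {S Y : Matrix ι ι 𝕜} {x : ι → 𝕜}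
    (hker : LinearMap.ker S.mulVecLin ≤ 𝕜 ∙ x) (hx : ∀ k, ‖x k‖ = 1) (hSY : S * Y = 0)
    (hdiag : ∀ k, Y k k = 1) : Y = vecMulVec x (star x) := by
  have hcol : ∀ j, ∃ c : 𝕜, c • x = fun i => Y i j := fun j =>
    Submodule.mem_span_singleton.mp <| hker <| show S *ᵥ (fun i => Y i j) = 0 from
      funext fun i => congrFun (congrFun hSY i) j
  choose c hc using hcol
  have hYij : ∀ i j, Y i j = c j * x i := fun i j => (congrFun (hc j) i).symm
  have hcx : ∀ j, c j = star (x j) := fun j =>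
    calc c j = c j * x j * star (x j) := by
          rw [mul_assoc, RCLike.mul_star_eq_one_of_norm_eq_one (hx j), mul_one]
      _ = star (x j) := by rw [← hYij, hdiag, one_mul]
  ext i j
  rw [hYij, hcx, vecMulVec_apply, Pi.star_apply, mul_comm]

section DualCertificate

variable [DecidableEq ι] {C S Y : Matrix ι ι 𝕜} {d : ι → ℝ} {x : ι → 𝕜}

lemma trace_mul_eq_sum_sub_trace_mul (hSC : S = diagonal (fun k => (d k : 𝕜)) - C)
    (hdiag : ∀ k, Y k k = 1) : (C * Y).trace = ∑ k, (d k : 𝕜) - (S * Y).trace := by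
  have hD : ((diagonal fun k => (d k : 𝕜)) * Y).trace = ∑ k, (d k : 𝕜) := by
    simp [trace, diagonal_mul, hdiag]
  rw [hSC, sub_mul, trace_sub, hD, sub_sub_cancel]

lemma trace_mul_vecMulVec_sub_trace_mul (hSC : S = diagonal (fun k => (d k : 𝕜)) - C)
    (hSx : S *ᵥ x = 0) (hx : ∀ k, ‖x k‖ = 1) (hdiag : ∀ k, Y k k = 1) :
    (C * vecMulVec x (star x)).trace - (C * Y).trace = (S * Y).trace := by
  have hxx : ∀ k, vecMulVec x (star x) k k = 1 :=
    fun k => RCLike.mul_star_eq_one_of_norm_eq_one (hx k)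
  rw [trace_mul_eq_sum_sub_trace_mul hSC hxx, trace_mul_eq_sum_sub_trace_mul hSC hdiag,
    mul_vecMulVec, hSx, zero_vecMulVec, trace_zero]
  ring

variable (hSC : S = diagonal (fun k => (d k : 𝕜)) - C) (hS : S.PosSemidef) (hSx : S *ᵥ x = 0)
  (hx : ∀ k, ‖x k‖ = 1) (hY : Y.PosSemidef) (hdiag : ∀ k, Y k k = 1)
include hSC hS hSx hx hY hdiag

theorem re_trace_mul_le_of_dual_certificate :
    RCLike.re (C * Y).trace ≤ RCLike.re (C * vecMulVec x (star x)).trace := by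
  have h := congrArg RCLike.re (trace_mul_vecMulVec_sub_trace_mul hSC hSx hx hdiag)
  rw [map_sub] at h
  linarith [(RCLike.nonneg_iff.mp (hS.trace_mul_nonneg hY)).1]

theorem eq_vecMulVec_of_dual_certificate (hker : LinearMap.ker S.mulVecLin ≤ 𝕜 ∙ x)
    (heq : RCLike.re (C * Y).trace = RCLike.re (C * vecMulVec x (star x)).trace) :
    Y = vecMulVec x (star x) := by
  have h := congrArg RCLike.re (trace_mul_vecMulVec_sub_trace_mul hSC hSx hx hdiag)
  rw [map_sub, heq, sub_self] at h
  have htr : (S * Y).trace = 0 :=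
    RCLike.ext (by simpa using h.symm)
      (by simpa using (RCLike.nonneg_iff.mp (hS.trace_mul_nonneg hY)).2)
  exact eq_vecMulVec_of_mul_eq_zero hker hx (hS.mul_eq_zero_of_trace_mul_eq_zero hY htr) hdiag

end DualCertificate

lemma trace_mul_vecMulVec_star (C : Matrix ι ι 𝕜) (v : ι → 𝕜) :
    (C * vecMulVec v (star v)).trace = star v ⬝ᵥ C *ᵥ v := by
  rw [mul_vecMulVec, trace_vecMulVec, dotProduct_comm]

omit [Fintype ι] in
lemma exists_exp_mul_of_vecMulVec_eq [Nonempty ι] {v x : ι → ℂ}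
    (hv : ∀ k, ‖v k‖ = 1) (hx : ∀ k, ‖x k‖ = 1)
    (h : vecMulVec v (star v) = vecMulVec x (star x)) :
    ∃ θ : ℝ, v = fun k => Complex.exp (θ * Complex.I) * x k := by
  obtain ⟨j⟩ := ‹Nonempty ι›
  set c := star (x j) * v j
  have hc : ‖c‖ = 1 := by rw [norm_mul, norm_star, hx, hv, one_mul]
  obtain ⟨θ, hθ⟩ := (Complex.norm_eq_one_iff c).mp hc
  refine ⟨θ, funext fun k => ?_⟩
  have hkj : v k * star (v j) = x k * star (x j) := congrFun (congrFun h k) j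
  calc v k = v k * star (v j) * v j := by
        rw [mul_assoc, mul_comm (star _), RCLike.mul_star_eq_one_of_norm_eq_one (hv j), mul_one]
    _ = c * x k := by rw [hkj]; ring
    _ = _ := by rw [hθ]

end Matrix

namespace PhaseSync

open Complex
open scoped ComplexOrder

section

open ComplexConjugate Matrix

variable {n : ℕ}

lemma l2norm_eq_norm (v : Fin n → ℂ) : l2norm v = ‖WithLp.toLp 2 v‖ := by
  simp [l2norm, EuclideanSpace.norm_eq]

lemma l2norm_nonneg (v : Fin n → ℂ) : 0 ≤ l2norm v := Real.sqrt_nonneg _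

lemma l2norm_pos {v : Fin n → ℂ} (hv : v ≠ 0) : 0 < l2norm v := by
  rw [l2norm_eq_norm, norm_pos_iff]
  exact fun h => hv (congrArg WithLp.ofLp h)

lemma l2norm_smul (c : ℂ) (v : Fin n → ℂ) : l2norm (c • v) = ‖c‖ * l2norm v := by
  rw [l2norm_eq_norm, WithLp.toLp_smul, norm_smul, ← l2norm_eq_norm]

lemma norm_herm_le (u v : Fin n → ℂ) : ‖herm u v‖ ≤ l2norm u * l2norm v := by
  have : herm u v = inner ℂ (WithLp.toLp 2 u) (WithLp.toLp 2 v) := by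
    simp [herm, PiLp.inner_apply, mul_comm]
  rw [this, l2norm_eq_norm, l2norm_eq_norm]
  exact norm_inner_le_norm _ _

lemma norm_le_linfnorm (v : Fin n → ℂ) (k : Fin n) : ‖v k‖ ≤ linfnorm v :=
  le_ciSup (f := fun k => ‖v k‖) (Set.finite_range _).bddAbove k

lemma l2norm_mulVec_le (W : Matrix (Fin n) (Fin n) ℂ) (u : Fin n → ℂ) :
    l2norm (W *ᵥ u) ≤ opNorm W * l2norm u := by
  rcases eq_or_ne u 0 with rfl | hu
  · simp [l2norm]
  have hbdd : BddAbove (Set.range fun u : {u : Fin n → ℂ // l2norm u = 1} => l2norm (W *ᵥ u)) :=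
    ⟨‖toEuclideanCLM (𝕜 := ℂ) W‖, by
      rintro - ⟨⟨u, hu⟩, rfl⟩
      simpa only [toEuclideanCLM_toLp, ← l2norm_eq_norm, hu, mul_one] using
        (toEuclideanCLM (𝕜 := ℂ) W).le_opNorm (WithLp.toLp 2 u)⟩
  have hpos := l2norm_pos hu
  set c : ℂ := (((l2norm u)⁻¹ : ℝ) : ℂ)
  have hc : ‖c‖ = (l2norm u)⁻¹ := by simp [c, hpos.le]
  have hcu : l2norm (c • u) = 1 := by
    rw [l2norm_smul, hc, inv_mul_cancel₀ hpos.ne']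
  have hle := le_ciSup hbdd ⟨c • u, hcu⟩
  rw [mulVec_smul, l2norm_smul, hc, inv_mul_le_iff₀ hpos, mul_comm] at hle
  exact hle

lemma re_dotProduct_mulVec_le (W : Matrix (Fin n) (Fin n) ℂ) (u : Fin n → ℂ) :
    (star u ⬝ᵥ W *ᵥ u).re ≤ opNorm W * l2norm u ^ 2 :=
  calc (star u ⬝ᵥ W *ᵥ u).re ≤ ‖herm u (W *ᵥ u)‖ := re_le_norm _
    _ ≤ l2norm u * (opNorm W * l2norm u) :=
      (norm_herm_le _ _).trans (mul_le_mul_of_nonneg_left (l2norm_mulVec_le W u) (l2norm_nonneg _))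
    _ = opNorm W * l2norm u ^ 2 := by ring

variable {z x : Fin n → ℂ}

lemma l2norm_exp_mul_sub_sq (hz : ∀ k, ‖z k‖ = 1) (hx : ∀ k, ‖x k‖ = 1) (θ : ℝ) :
    l2norm (fun k => exp (θ * I) * z k - x k) ^ 2
      = 2 * n - 2 * (exp (θ * I) * conj (herm z x)).re := by
  have hk : ∀ k, ‖exp (θ * I) * z k - x k‖ ^ 2
      = 2 - 2 * (exp (θ * I) * (z k * conj (x k))).re := fun k => by
    rw [← normSq_eq_norm_sq, normSq_sub, normSq_eq_norm_sq, normSq_eq_norm_sq, norm_mul,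
      norm_exp_ofReal_mul_I, hz, hx, mul_assoc]
    ring
  have hconj : conj (herm z x) = ∑ k, z k * conj (x k) := by
    simp [herm, map_sum, mul_comm]
  rw [l2norm, Real.sq_sqrt (Finset.sum_nonneg fun _ _ => sq_nonneg _),
    Finset.sum_congr rfl fun k _ => hk k, Finset.sum_sub_distrib, hconj, Finset.mul_sum, re_sum,
    ← Finset.mul_sum]
  simp [mul_comm]

lemma d2_eq_l2norm (hz : ∀ k, ‖z k‖ = 1) (hx : ∀ k, ‖x k‖ = 1) :
    d2 z x = l2norm (fun k => exp (arg (herm z x) * I) * z k - x k) := by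
  refine le_antisymm (ciInf_le ⟨0, ?_⟩ _) (le_ciInf fun θ => ?_)
  · rintro - ⟨θ, rfl⟩
    exact l2norm_nonneg _
  rw [← pow_le_pow_iff_left₀ (l2norm_nonneg _) (l2norm_nonneg _) two_ne_zero,
    l2norm_exp_mul_sub_sq hz hx, l2norm_exp_mul_sub_sq hz hx, exp_arg_mul_I_mul_conj, ofReal_re]
  have := (re_le_norm (exp (θ * I) * conj (herm z x))).trans_eq
    (by rw [norm_mul, norm_exp_ofReal_mul_I, norm_conj, one_mul])
  linarith

lemma d2_sq (hz : ∀ k, ‖z k‖ = 1) (hx : ∀ k, ‖x k‖ = 1) :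
    d2 z x ^ 2 = 2 * n - 2 * ‖herm z x‖ := by
  rw [d2_eq_l2norm hz hx, l2norm_exp_mul_sub_sq hz hx, exp_arg_mul_I_mul_conj, ofReal_re]

lemma norm_herm_le_d2_mul (hz : ∀ k, ‖z k‖ = 1) (hx : ∀ k, ‖x k‖ = 1) {u : Fin n → ℂ}
    (hu : herm x u = 0) : ‖herm z u‖ ≤ d2 z x * l2norm u := by
  rw [d2_eq_l2norm hz hx]
  set e := exp (arg (herm z x) * I)
  have he : herm (fun k => e * z k - x k) u = conj e * herm z u := by
    rw [← sub_zero (conj e * _), ← hu]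
    simp [herm, sub_mul, Finset.mul_sum, mul_assoc]
  calc ‖herm z u‖ = ‖herm (fun k => e * z k - x k) u‖ := by
        rw [he, norm_mul, norm_conj, norm_exp_ofReal_mul_I, one_mul]
    _ ≤ _ := norm_herm_le _ _

variable {W : Matrix (Fin n) (Fin n) ℂ} {σ : ℝ}

lemma outer_eq_vecMulVec (v : Fin n → ℂ) : outer v = vecMulVec v (star v) := rfl

lemma outer_mulVec (v : Fin n → ℂ) : outer z *ᵥ v = fun k => herm z v * z k := by
  ext k
  simp [outer_eq_vecMulVec, vecMulVec_mulVec, herm, dotProduct, mul_comm]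

lemma isHermitian_outer_add_smul (hW : W.IsHermitian) : (outer z + σ • W).IsHermitian :=
  (posSemidef_vecMulVec_self_star z).isHermitian.add (hW.smul (IsSelfAdjoint.all σ))

lemma norm_herm_sub_le_norm_mulVec (hz : ∀ k, ‖z k‖ = 1) (hσ : 0 ≤ σ) (k : Fin n) :
    ‖herm z x‖ - σ * linfnorm (W *ᵥ x) ≤ ‖((outer z + σ • W) *ᵥ x) k‖ := by
  have hWx : ‖((σ • W) *ᵥ x) k‖ ≤ σ * linfnorm (W *ᵥ x) := by
    rw [smul_mulVec, Pi.smul_apply, norm_smul, Real.norm_of_nonneg hσ]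
    exact mul_le_mul_of_nonneg_left (norm_le_linfnorm _ k) hσ
  have := norm_sub_norm_le ((outer z *ᵥ x) k) (-((σ • W) *ᵥ x) k)
  rw [outer_mulVec, norm_mul, hz, mul_one, norm_neg, sub_neg_eq_add] at this
  rw [add_mulVec, Pi.add_apply, outer_mulVec]
  linarith

lemma re_dotProduct_diagonal_sub_mulVec (μ : Fin n → ℝ) (u : Fin n → ℂ) :
    (star u ⬝ᵥ (diagonal (fun k => (μ k : ℂ)) - (outer z + σ • W)) *ᵥ u).re
      = ∑ k, μ k * ‖u k‖ ^ 2 - ‖herm z u‖ ^ 2 - σ * (star u ⬝ᵥ W *ᵥ u).re := by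
  have hD : star u ⬝ᵥ diagonal (fun k => (μ k : ℂ)) *ᵥ u
      = ((∑ k, μ k * ‖u k‖ ^ 2 : ℝ) : ℂ) := by
    push_cast
    refine Finset.sum_congr rfl fun k _ => ?_
    rw [mulVec_diagonal, Pi.star_apply, ← starRingEnd_apply, ← mul_conj']
    ring
  have hO : star u ⬝ᵥ outer z *ᵥ u = ((‖herm z u‖ ^ 2 : ℝ) : ℂ) := by
    rw [outer_mulVec, ofReal_pow, ← mul_conj']
    simp only [dotProduct, herm, map_sum, map_mul, conj_conj, Finset.mul_sum]
    exact Finset.sum_congr rfl fun k _ => by rw [Pi.star_apply, ← starRingEnd_apply]; ring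
  rw [sub_mulVec, add_mulVec, smul_mulVec, dotProduct_sub, dotProduct_add, dotProduct_smul,
    hD, hO]
  simp only [sub_re, add_re, ofReal_re, smul_re, smul_eq_mul]
  ring

lemma gap_mul_sq_le_re_dotProduct_mulVec (hz : ∀ k, ‖z k‖ = 1) (hx : ∀ k, ‖x k‖ = 1)
    (hσ : 0 ≤ σ) {u : Fin n → ℂ} (hu : herm x u = 0) :
    ((n : ℝ) - 3 / 2 * d2 z x ^ 2 - σ * linfnorm (W *ᵥ x) - σ * opNorm W) * l2norm u ^ 2
      ≤ (star u ⬝ᵥ (diagonal (fun k => (‖((outer z + σ • W) *ᵥ x) k‖ : ℂ))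
          - (outer z + σ • W)) *ᵥ u).re := by
  have hgap : (n : ℝ) - 3 / 2 * d2 z x ^ 2 - σ * linfnorm (W *ᵥ x) - σ * opNorm W
      = (‖herm z x‖ - σ * linfnorm (W *ᵥ x)) - d2 z x ^ 2 - σ * opNorm W := by
    rw [d2_sq hz hx]; ring
  have hdiag : (‖herm z x‖ - σ * linfnorm (W *ᵥ x)) * l2norm u ^ 2
      ≤ ∑ k, ‖((outer z + σ • W) *ᵥ x) k‖ * ‖u k‖ ^ 2 := by
    rw [l2norm, Real.sq_sqrt (Finset.sum_nonneg fun _ _ => sq_nonneg _), Finset.mul_sum]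
    exact Finset.sum_le_sum fun k _ =>
      mul_le_mul_of_nonneg_right (norm_herm_sub_le_norm_mulVec hz hσ k) (sq_nonneg _)
  have hrank1 : ‖herm z u‖ ^ 2 ≤ d2 z x ^ 2 * l2norm u ^ 2 := by
    rw [← mul_pow]
    exact pow_le_pow_left₀ (norm_nonneg _) (norm_herm_le_d2_mul hz hx hu) 2
  have hnoise := mul_le_mul_of_nonneg_left (re_dotProduct_mulVec_le W u) hσ
  rw [re_dotProduct_diagonal_sub_mulVec, hgap]
  linarith

lemma re_mul_outer_apply_self {C : Matrix (Fin n) (Fin n) ℂ} (hx : ∀ k, ‖x k‖ = 1)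
    (hfix : C *ᵥ x = fun k => (‖(C *ᵥ x) k‖ : ℂ) * x k) (k : Fin n) :
    ((C * outer x) k k).re = ‖(C *ᵥ x) k‖ := by
  rw [outer_eq_vecMulVec, mul_vecMulVec, vecMulVec_apply, hfix, Pi.star_apply, mul_assoc,
    RCLike.mul_star_eq_one_of_norm_eq_one (hx k), mul_one, ← hfix, ofReal_re]

lemma diagonal_sub_mulVec_eq_zero {C : Matrix (Fin n) (Fin n) ℂ}
    (hfix : C *ᵥ x = fun k => (‖(C *ᵥ x) k‖ : ℂ) * x k) :
    (diagonal (fun k => (‖(C *ᵥ x) k‖ : ℂ)) - C) *ᵥ x = 0 := by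
  rw [sub_mulVec, sub_eq_zero]
  exact funext fun k => (mulVec_diagonal _ _ k).trans (congrFun hfix k).symm

end

theorem stmt19_general (n : ℕ) (hn : 0 < n) (z : Fin n → ℂ) (hz : ∀ k, ‖z k‖ = 1)
    (W : Matrix (Fin n) (Fin n) ℂ) (hW : W.IsHermitian) (σ : ℝ) (hσ : 0 ≤ σ)
    (C : Matrix (Fin n) (Fin n) ℂ) (hCdef : C = outer z + σ • W)
    (x : Fin n → ℂ) (hx : ∀ k, ‖x k‖ = 1)
    (hfix : C.mulVec x = fun k => (‖C.mulVec x k‖ : ℂ) * x k)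
    (hcond : 0 < (n : ℝ) - 3 / 2 * d2 z x ^ 2 - σ * linfnorm (W.mulVec x) - σ * opNorm W)
    (S : Matrix (Fin n) (Fin n) ℂ)
    (hSdef : S = Matrix.diagonal (fun k => ((((C * outer x) k k).re : ℝ) : ℂ)) - C) :
    S.PosSemidef ∧ S.rank = n - 1 ∧
    (∀ Y : Matrix (Fin n) (Fin n) ℂ, Y.PosSemidef → (∀ k, Y k k = 1) →
      ((C * Y).trace).re ≤ ((C * outer x).trace).re ∧
      (((C * Y).trace).re = ((C * outer x).trace).re → Y = outer x)) ∧
    (∀ v : Fin n → ℂ, (∀ k, ‖v k‖ = 1) →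
      (dotProduct (star v) (C.mulVec v)).re ≤
        (dotProduct (star x) (C.mulVec x)).re ∧
      ((dotProduct (star v) (C.mulVec v)).re =
          (dotProduct (star x) (C.mulVec x)).re →
        ∃ θ : ℝ, v = fun k => Complex.exp (θ * Complex.I) * x k)) := by
  have hS : S = Matrix.diagonal (fun k => (‖C.mulVec x k‖ : ℂ)) - C := by
    simp only [hSdef, re_mul_outer_apply_self hx hfix]
  have hSx : S.mulVec x = 0 := hS ▸ diagonal_sub_mulVec_eq_zero hfix
  have hSherm : S.IsHermitian := hS ▸ (Matrix.isHermitian_diagonal_of_self_adjoint _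
    (funext fun k => conj_ofReal _)).sub (hCdef ▸ isHermitian_outer_add_smul hW)
  set gap := (n : ℝ) - 3 / 2 * d2 z x ^ 2 - σ * linfnorm (W.mulVec x) - σ * opNorm W
  have hquad : ∀ u, star x ⬝ᵥ u = 0 → gap * l2norm u ^ 2 ≤ (star u ⬝ᵥ S.mulVec u).re :=
    fun u hu => by
      rw [hS, hCdef]
      exact gap_mul_sq_le_re_dotProduct_mulVec hz hx hσ hu
  have hpsd : S.PosSemidef := hSherm.posSemidef_of_nonneg_on_orthogonal hSx fun u hu =>
    (mul_nonneg hcond.le (sq_nonneg _)).trans (hquad u hu)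
  have hker := Matrix.ker_mulVecLin_eq_span_of_pos_on_orthogonal hSx fun u hu hu0 =>
    (mul_pos hcond (pow_pos (l2norm_pos hu0) 2)).trans_le (hquad u hu)
  have hsdp (Y : Matrix (Fin n) (Fin n) ℂ) (hY : Y.PosSemidef) (hYdiag : ∀ k, Y k k = 1) :=
    And.intro (Matrix.re_trace_mul_le_of_dual_certificate hSdef hpsd hSx hx hY hYdiag)
      (Matrix.eq_vecMulVec_of_dual_certificate hSdef hpsd hSx hx hY hYdiag hker.le)
  have hx0 : x ≠ 0 := fun h => by simpa [h] using hx ⟨0, hn⟩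
  refine ⟨hpsd, by simpa using Matrix.rank_eq_card_sub_one_of_ker_eq_span hx0 hker, hsdp,
    fun v hv => ?_⟩
  have : Nonempty (Fin n) := ⟨⟨0, hn⟩⟩
  obtain ⟨hle, heq⟩ := hsdp (outer v) (Matrix.posSemidef_vecMulVec_self_star v)
    fun k => RCLike.mul_star_eq_one_of_norm_eq_one (hv k)
  simp only [outer_eq_vecMulVec, Matrix.trace_mul_vecMulVec_star] at hle heq
  exact ⟨hle, fun h => Matrix.exists_exp_mul_of_vecMulVec_eq hv hx (heq h)⟩

/-- if `x` is a unit-modulus fixed point (`Cx = diag(μ)x`, `μₖ = |(Cx)ₖ|`)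
with `n - (3/2) d₂(z,x)² - σ‖Wx‖∞ - σ‖W‖₂ > 0`, then `S = Re(ddiag(Cxx*)) - C` is PSD of
rank `n-1`; hence `xx*` is the unique SDP solution and `x` the unique (up to phase)
maximizer of `v*Cv` over unit-modulus vectors. -/
theorem stmt19 (n : ℕ) (hn : 0 < n) (z : Fin n → ℂ) (hz : ∀ k, ‖z k‖ = 1)
    (W : Matrix (Fin n) (Fin n) ℂ) (hW : W.IsHermitian) (σ : ℝ) (hσ : 0 ≤ σ)
    (C : Matrix (Fin n) (Fin n) ℂ) (hCdef : C = outer z + σ • W)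
    (x : Fin n → ℂ) (hx : ∀ k, ‖x k‖ = 1)
    (hfix : C.mulVec x = fun k => (‖C.mulVec x k‖ : ℂ) * x k)
    (hphase : herm z x = (‖herm z x‖ : ℂ))
    (hcond : 0 < (n : ℝ) - 3 / 2 * d2 z x ^ 2 - σ * linfnorm (W.mulVec x) - σ * opNorm W)
    (S : Matrix (Fin n) (Fin n) ℂ)
    (hSdef : S = Matrix.diagonal (fun k => ((((C * outer x) k k).re : ℝ) : ℂ)) - C) :
    S.PosSemidef ∧ S.rank = n - 1 ∧
    (∀ Y : Matrix (Fin n) (Fin n) ℂ, Y.PosSemidef → (∀ k, Y k k = 1) →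
      ((C * Y).trace).re ≤ ((C * outer x).trace).re ∧
      (((C * Y).trace).re = ((C * outer x).trace).re → Y = outer x)) ∧
    (∀ v : Fin n → ℂ, (∀ k, ‖v k‖ = 1) →
      (dotProduct (star v) (C.mulVec v)).re ≤
        (dotProduct (star x) (C.mulVec x)).re ∧
      ((dotProduct (star v) (C.mulVec v)).re =
          (dotProduct (star x) (C.mulVec x)).re →
        ∃ θ : ℝ, v = fun k => Complex.exp (θ * Complex.I) * x k)) :=
  stmt19_general n hn z hz W hW σ hσ C hCdef x hx hfix hcond S hSdef

end PhaseSync
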